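/- Let (V,q) be a finite-dimensional nondegenerate quadratic space over a field F and U ⊆ V a totally isotropic subspace. Then the filtration W^U on Clif(V,q) restricts on ι(V) to the filtration W^U on V: for every integer k, ι(V) ∩ W^U_k Clif(V) = ι(W^U_k V). In particular ι(V) ∩ W^U_{−1}Clif(V) = ι(U) and ι(V) ∩ W^U_0 Clif(V) = ι(U^⊥). -/

import Mathlib

/-!
Fix a linear retraction `π : V → U` and put `μ x := B(π ·, x - π x) ∈ V*`. In `V × V*` with the
form `(y, f) ↦ Q y + f y`, the vectors `a = (π x, 0)`, `b = (x - π x, -μ x)`, `c = (0, μ x)`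
satisfy `Q a = Q c = 0`, `a ⟂ b`, `b ⟂ c` and `Q b + B(a, c) = Q x`, because `U` is
totally isotropic. So `x ↦ t⁻¹ ι a + ι b + t ι c` squares to `Q x` and extends to an algebra map
from `Clif(V, Q)` to Laurent polynomials over `Clif(V × V*)` sending `W_k Clif(V)` into
`t`-degree `≤ k`. Since `ι` is injective on `V × V*`, the `t`-degree of the image of `ι x` is
`≤ k` only if the coefficients `a, b, c` vanish as `x ∈ W_k V` requires; note `μ x = 0` iff
`x ∈ U^⊥`.
-/

open CliffordAlgebra QuadraticMap

noncomputable section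

variable {F V : Type*} [Field F] [AddCommGroup V] [Module F V]
variable (Q : QuadraticForm F V) (U : Submodule F V)

/-- The filtration `W^U` on `V`: `W_k = 0` for `k < -1`, `W_{-1} = U`, `W_0 = U^⊥`,
`W_k = V` for `k ≥ 1`. -/
def filtV (k : ℤ) : Submodule F V :=
  if k < -1 then ⊥
  else if k = -1 then U
  else if k = 0 then LinearMap.BilinForm.orthogonal (QuadraticMap.polarBilin Q) U
  else ⊤

/-- The induced filtration `W^U` on the Clifford algebra: `W_k Clif(V)` is the span of the
products `ι(x₁)⋯ι(x_r)` with `x_i ∈ W_{α_i} V` and `α₁ + ⋯ + α_r ≤ k`. -/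
def filtC (k : ℤ) : Submodule F (CliffordAlgebra Q) :=
  Submodule.span F
    {z | ∃ (r : ℕ) (f : Fin r → V) (α : Fin r → ℤ),
      (∀ i, f i ∈ filtV Q U (α i)) ∧ (∑ i, α i) ≤ k ∧
      z = (List.ofFn fun i => CliffordAlgebra.ι Q (f i)).prod}

end

open AddMonoidAlgebra
open scoped Pointwise

theorem CliffordAlgebra.ι_injective_of_free {R M : Type*} [CommRing R] [AddCommGroup M]
    [Module R M] [Module.Free R M] (Q : QuadraticForm R M) : Function.Injective (ι Q) := by
  obtain ⟨B, hB⟩ := LinearMap.BilinMap.toQuadraticMap_surjective (0 - Q)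
  intro x y hxy
  have h := congrArg (changeForm hB) hxy
  rw [changeForm_ι, changeForm_ι] at h
  exact ExteriorAlgebra.ι_leftInverse.injective h

theorem QuadraticMap.polar_eq_zero_of_isotropic {R M : Type*} [CommRing R] [AddCommGroup M]
    [Module R M] {Q : QuadraticForm R M} {U : Submodule R M} (hU : ∀ u ∈ U, Q u = 0)
    {a b : M} (ha : a ∈ U) (hb : b ∈ U) : polar Q a b = 0 := by
  simp [polar, hU a ha, hU b hb, hU _ (add_mem ha hb)]

namespace AddMonoidAlgebra

variable {R S M : Type*} [CommSemiring R] [Semiring S] [Module R S]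

theorem mul_mem_supported_add [AddMonoid M] {s t : Set M} {x y : AddMonoidAlgebra S M}
    (hx : x ∈ supported R S s) (hy : y ∈ supported R S t) : x * y ∈ supported R S (s + t) := by
  classical
  intro m hm
  obtain ⟨a, ha, b, hb, rfl⟩ := Finset.mem_add.1 (support_coeff_mul_subset x y hm)
  exact Set.add_mem_add (hx ha) (hy hb)

theorem single_mem_supported {s : Set M} {m : M} (hm : m ∈ s) (a : S) :
    single m a ∈ supported R S s :=
  fun _ h => Finset.mem_singleton.1 (Finsupp.support_single_subset h) ▸ hm

theorem prod_ofFn_mem_supported_Iic [AddCommMonoid M] [PartialOrder M] [IsOrderedAddMonoid M]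
    {r : ℕ} (g : Fin r → AddMonoidAlgebra S M) (α : Fin r → M)
    (hg : ∀ i, g i ∈ supported R S (Set.Iic (α i))) :
    (List.ofFn g).prod ∈ supported R S (Set.Iic (∑ i, α i)) := by
  induction r with
  | zero => exact single_mem_supported (Set.mem_Iic.2 le_rfl) 1
  | succ r ih =>
    rw [List.ofFn_succ, List.prod_cons, Fin.sum_univ_succ]
    exact supported_mono (Set.Iic_add_Iic_subset _ _)
      (mul_mem_supported_add (hg 0) (ih _ _ fun i => hg i.succ))

end AddMonoidAlgebra

section LaurentTrinomial

variable {A : Type*} [Ring A]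

/-- `t⁻¹ a + b + t c`, with `AddMonoidAlgebra A ℤ` read as `A[t, t⁻¹]`. -/
noncomputable def laurentTrinomial (a b c : A) : AddMonoidAlgebra A ℤ :=
  single (-1) a + single 0 b + single 1 c

theorem coeff_laurentTrinomial (a b c : A) (m : ℤ) :
    (laurentTrinomial a b c).coeff m =
      if m = -1 then a else if m = 0 then b else if m = 1 then c else 0 := by
  simp only [laurentTrinomial, coeff_add, coeff_single, Finsupp.add_apply, Finsupp.single_apply]
  split_ifs <;> first | omega | simp

theorem laurentTrinomial_mul_self {a b c : A} (ha : a * a = 0) (hc : c * c = 0)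
    (hab : a * b + b * a = 0) (hbc : b * c + c * b = 0) :
    laurentTrinomial a b c * laurentTrinomial a b c = single 0 (b * b + (a * c + c * a)) := by
  have hba : b * a = -(a * b) := eq_neg_of_add_eq_zero_right hab
  have hcb : c * b = -(b * c) := eq_neg_of_add_eq_zero_right hbc
  simp only [laurentTrinomial, add_mul, mul_add, single_mul_single]
  norm_num [ha, hc, hba, hcb, single_neg, single_add]
  abel

theorem laurentTrinomial_mem_supported_Iic_iff {R : Type*} [CommSemiring R] [Module R A]
    {a b c : A} {k : ℤ} :
    laurentTrinomial a b c ∈ supported R A (Set.Iic k) ↔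
      (k < -1 → a = 0) ∧ (k < 0 → b = 0) ∧ (k < 1 → c = 0) := by
  simp only [mem_supported', Set.mem_Iic, not_le, coeff_laurentTrinomial]
  refine ⟨fun h => ⟨fun hk => ?_, fun hk => ?_, fun hk => ?_⟩, fun ⟨ha, hb, hc⟩ m hm => ?_⟩
  · simpa using h (-1) hk
  · simpa using h 0 hk
  · simpa using h 1 hk
  · split_ifs
    · exact ha (by omega)
    · exact hb (by omega)
    · exact hc (by omega)
    · rfl

end LaurentTrinomial

theorem laurentTrinomial_ι_mul_self {R W : Type*} [CommRing R] [AddCommGroup W] [Module R W]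
    (Q : QuadraticForm R W) {a b c : W} (ha : Q a = 0) (hc : Q c = 0)
    (hab : polar Q a b = 0) (hbc : polar Q b c = 0) :
    laurentTrinomial (ι Q a) (ι Q b) (ι Q c) * laurentTrinomial (ι Q a) (ι Q b) (ι Q c) =
      algebraMap R _ (Q b + polar Q a c) := by
  rw [laurentTrinomial_mul_self (by rw [ι_sq_scalar, ha, map_zero])
    (by rw [ι_sq_scalar, hc, map_zero]) (by rw [ι_mul_ι_add_swap, hab, map_zero])
    (by rw [ι_mul_ι_add_swap, hbc, map_zero]), ι_sq_scalar, ι_mul_ι_add_swap, ← map_add]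
  rfl

namespace QuadraticForm

variable {R M : Type*} [CommRing R] [AddCommGroup M] [Module R M]

def extendDual (Q : QuadraticForm R M) : QuadraticForm R (M × Module.Dual R M) :=
  Q.comp (LinearMap.fst R M _) +
    (dualProd R M).comp (LinearEquiv.prodComm R M (Module.Dual R M)).toLinearMap

variable (Q : QuadraticForm R M)

@[simp]
theorem extendDual_apply (x : M × Module.Dual R M) : Q.extendDual x = Q x.1 + x.2 x.1 := by
  simp [extendDual]

theorem polar_extendDual (x y : M × Module.Dual R M) :
    polar Q.extendDual x y = polar Q x.1 y.1 + x.2 y.1 + y.2 x.1 := by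
  simp only [polar, extendDual_apply, Prod.fst_add, Prod.snd_add, map_add, LinearMap.add_apply]
  ring

end QuadraticForm

section Splitting

variable {F V : Type*} [Field F] [AddCommGroup V] [Module F V] (Q : QuadraticForm F V)
  {U : Submodule F V} (π : V →ₗ[F] U)

noncomputable def coupling : V →ₗ[F] Module.Dual F V :=
  ((polarBilin Q).compl₁₂ (U.subtype ∘ₗ π) (LinearMap.id - U.subtype ∘ₗ π)).flip

theorem coupling_apply (x w : V) : coupling Q π x w = polar Q (π w) (x - π x) := rfl

noncomputable def splitNeg : V →ₗ[F] V × Module.Dual F V :=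
  LinearMap.inl F V _ ∘ₗ U.subtype ∘ₗ π

noncomputable def splitZero : V →ₗ[F] V × Module.Dual F V :=
  (LinearMap.id - U.subtype ∘ₗ π).prod (-coupling Q π)

noncomputable def splitPos : V →ₗ[F] V × Module.Dual F V :=
  LinearMap.inr F V _ ∘ₗ coupling Q π

@[simp] theorem splitNeg_apply (x : V) : splitNeg π x = ((π x : V), 0) := rfl
@[simp] theorem splitZero_apply (x : V) : splitZero Q π x = (x - π x, -coupling Q π x) := rfl
@[simp] theorem splitPos_apply (x : V) : splitPos Q π x = (0, coupling Q π x) := rfl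

noncomputable def laurentSplit : V →ₗ[F] AddMonoidAlgebra (CliffordAlgebra Q.extendDual) ℤ :=
  lsingle (-1) ∘ₗ ι Q.extendDual ∘ₗ splitNeg π + lsingle 0 ∘ₗ ι Q.extendDual ∘ₗ splitZero Q π +
    lsingle 1 ∘ₗ ι Q.extendDual ∘ₗ splitPos Q π

theorem laurentSplit_apply (x : V) :
    laurentSplit Q π x = laurentTrinomial (ι Q.extendDual (splitNeg π x))
      (ι Q.extendDual (splitZero Q π x)) (ι Q.extendDual (splitPos Q π x)) := rfl

variable {Q π}

theorem retraction_eq_self (hπ : ∀ u : U, π u = u) {x : V} (hx : x ∈ U) : (π x : V) = x :=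
  congrArg Subtype.val (hπ ⟨x, hx⟩)

theorem retraction_sub_self (hπ : ∀ u : U, π u = u) (x : V) : π (x - π x) = 0 := by
  rw [map_sub, hπ, sub_self]

theorem sub_retraction_eq_zero_iff (hπ : ∀ u : U, π u = u) {x : V} : x - π x = 0 ↔ x ∈ U :=
  ⟨fun h => sub_eq_zero.1 h ▸ (π x).2, fun hx => by rw [retraction_eq_self hπ hx, sub_self]⟩

theorem coupling_eq_zero_iff (hU : ∀ u ∈ U, Q u = 0) (hπ : ∀ u : U, π u = u) {x : V} :
    coupling Q π x = 0 ↔ x ∈ LinearMap.BilinForm.orthogonal (polarBilin Q) U := by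
  have key : ∀ w, coupling Q π x w = polar Q (π w) x := fun w => by
    rw [coupling_apply, polar_sub_right, polar_eq_zero_of_isotropic hU (π w).2 (π x).2, sub_zero]
  simp only [LinearMap.BilinForm.mem_orthogonal_iff, polarBilin_apply_apply, LinearMap.ext_iff,
    key, LinearMap.zero_apply]
  refine ⟨fun h u hu => ?_, fun h w => h _ (π w).2⟩
  simpa [hπ ⟨u, hu⟩] using h u

theorem mem_filtV_iff_split (hU : ∀ u ∈ U, Q u = 0) (hπ : ∀ u : U, π u = u) {k : ℤ} {x : V} :
    x ∈ filtV Q U k ↔ (k < -1 → splitNeg π x = 0) ∧ (k < 0 → splitZero Q π x = 0) ∧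
      (k < 1 → splitPos Q π x = 0) := by
  have hUorth : U ≤ LinearMap.BilinForm.orthogonal (polarBilin Q) U := fun x hx u hu =>
    polar_eq_zero_of_isotropic hU hu hx
  simp only [splitNeg_apply, splitZero_apply, splitPos_apply, Prod.mk_eq_zero, neg_eq_zero,
    Submodule.coe_eq_zero, sub_retraction_eq_zero_iff hπ, coupling_eq_zero_iff hU hπ]
  obtain hk | rfl | rfl | hk : k < -1 ∨ k = -1 ∨ k = 0 ∨ 0 < k := by omega
  · simp only [filtV, hk, (by omega : k < 0), (by omega : k < 1), if_true, true_implies,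
      and_true, Submodule.mem_bot]
    refine ⟨by rintro rfl; simp, fun ⟨h0, ⟨hxU, _⟩, _⟩ => ?_⟩
    rw [← retraction_eq_self hπ hxU, h0, Submodule.coe_zero]
  · simpa [filtV] using fun hx : x ∈ U => hUorth hx
  · simp [filtV]
  · rw [filtV, if_neg (by omega), if_neg (by omega), if_neg (by omega)]
    exact iff_of_true Submodule.mem_top
      ⟨fun h => absurd h (by omega), fun h => absurd h (by omega), fun h => absurd h (by omega)⟩

theorem laurentSplit_mul_self (hU : ∀ u ∈ U, Q u = 0) (hπ : ∀ u : U, π u = u) (x : V) :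
    laurentSplit Q π x * laurentSplit Q π x = algebraMap F _ (Q x) := by
  have hππ : π (π x) = π x := hπ (π x)
  have hQπ : Q (π x) = 0 := hU _ (π x).2
  rw [laurentSplit_apply, laurentTrinomial_ι_mul_self]
  · congr 1
    simp [coupling_apply, retraction_sub_self hπ, hππ, polar, hQπ]
  · simp [hQπ]
  · simp
  · simp [QuadraticForm.polar_extendDual, coupling_apply, hππ]
  · simp [QuadraticForm.polar_extendDual, coupling_apply, retraction_sub_self hπ]

noncomputable def laurentLift (hU : ∀ u ∈ U, Q u = 0) (hπ : ∀ u : U, π u = u) :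
    CliffordAlgebra Q →ₐ[F] AddMonoidAlgebra (CliffordAlgebra Q.extendDual) ℤ :=
  lift Q ⟨laurentSplit Q π, laurentSplit_mul_self hU hπ⟩

theorem laurentLift_ι_mem_supported_iff (hU : ∀ u ∈ U, Q u = 0) (hπ : ∀ u : U, π u = u)
    {k : ℤ} {x : V} :
    laurentLift hU hπ (ι Q x) ∈ supported F _ (Set.Iic k) ↔ x ∈ filtV Q U k := by
  rw [laurentLift, lift_ι_apply, laurentSplit_apply, laurentTrinomial_mem_supported_Iic_iff,
    mem_filtV_iff_split hU hπ]
  simp only [map_eq_zero_iff _ (ι_injective_of_free _)]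

theorem filtC_le_comap_laurentLift (hU : ∀ u ∈ U, Q u = 0) (hπ : ∀ u : U, π u = u) (k : ℤ) :
    filtC Q U k ≤ (supported F _ (Set.Iic k)).comap (laurentLift hU hπ).toLinearMap := by
  refine Submodule.span_le.2 ?_
  rintro _ ⟨r, f, α, hf, hα, rfl⟩
  refine supported_mono (Set.Iic_subset_Iic.2 hα) ?_
  rw [AlgHom.toLinearMap_apply, map_list_prod, List.map_ofFn]
  exact prod_ofFn_mem_supported_Iic _ α fun i =>
    (laurentLift_ι_mem_supported_iff hU hπ).2 (hf i)

end Splitting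

theorem ι_mem_filtC_iff {F V : Type*} [Field F] [AddCommGroup V] [Module F V]
    {Q : QuadraticForm F V} {U : Submodule F V} (hU : ∀ u ∈ U, Q u = 0) {k : ℤ} {x : V} :
    ι Q x ∈ filtC Q U k ↔ x ∈ filtV Q U k := by
  obtain ⟨π, hπ⟩ := U.subtype.exists_leftInverse_of_injective U.ker_subtype
  have hπ' : ∀ u : U, π u = u := LinearMap.ext_iff.1 hπ
  refine ⟨fun hx => (laurentLift_ι_mem_supported_iff hU hπ').1
    (filtC_le_comap_laurentLift hU hπ' k hx), fun hx => Submodule.subset_span ?_⟩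
  exact ⟨1, fun _ => x, fun _ => k, fun _ => hx, by simp, by simp⟩

theorem statement4_general
    {F V : Type*} [Field F] [AddCommGroup V] [Module F V]
    (Q : QuadraticForm F V)
    (U : Submodule F V) (hU : ∀ u ∈ U, Q u = 0) :
    (∀ k : ℤ,
      Set.range (CliffordAlgebra.ι Q) ∩ (filtC Q U k : Set (CliffordAlgebra Q))
        = CliffordAlgebra.ι Q '' (filtV Q U k : Set V)) ∧
    Set.range (CliffordAlgebra.ι Q) ∩ (filtC Q U (-1) : Set (CliffordAlgebra Q))
        = CliffordAlgebra.ι Q '' (U : Set V) ∧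
    Set.range (CliffordAlgebra.ι Q) ∩ (filtC Q U 0 : Set (CliffordAlgebra Q))
        = CliffordAlgebra.ι Q ''
            (LinearMap.BilinForm.orthogonal (QuadraticMap.polarBilin Q) U : Set V) := by
  have h : ∀ k : ℤ, Set.range (ι Q) ∩ (filtC Q U k : Set (CliffordAlgebra Q)) =
      ι Q '' (filtV Q U k : Set V) := fun k => by
    rw [← Set.image_preimage_eq_range_inter]
    congr 1
    ext x
    exact ι_mem_filtC_iff hU
  exact ⟨h, h (-1), h 0⟩

/-- For a totally isotropic subspace `U` of a finite-dimensional nondegenerate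
quadratic space `(V,q)`, the filtration `W^U` on `Clif(V,q)` restricts on `ι(V)` to the
filtration `W^U` on `V`: `ι(V) ∩ W^U_k Clif(V) = ι(W^U_k V)` for every `k`.  In particular
`ι(V) ∩ W^U_{-1} Clif(V) = ι(U)` and `ι(V) ∩ W^U_0 Clif(V) = ι(U^⊥)`. -/
theorem statement4
    {F V : Type*} [Field F] [AddCommGroup V] [Module F V] [FiniteDimensional F V]
    (Q : QuadraticForm F V)
    (hnd : (QuadraticMap.polarBilin Q).Nondegenerate)
    (U : Submodule F V) (hU : ∀ u ∈ U, Q u = 0) :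
    (∀ k : ℤ,
      Set.range (CliffordAlgebra.ι Q) ∩ (filtC Q U k : Set (CliffordAlgebra Q))
        = CliffordAlgebra.ι Q '' (filtV Q U k : Set V)) ∧
    Set.range (CliffordAlgebra.ι Q) ∩ (filtC Q U (-1) : Set (CliffordAlgebra Q))
        = CliffordAlgebra.ι Q '' (U : Set V) ∧
    Set.range (CliffordAlgebra.ι Q) ∩ (filtC Q U 0 : Set (CliffordAlgebra Q))
        = CliffordAlgebra.ι Q ''
            (LinearMap.BilinForm.orthogonal (QuadraticMap.polarBilin Q) U : Set V) :=
  statement4_general Q U hU
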